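/- Let A be an m×n real matrix, ε = (ε_1,…,ε_{min{m,n}}) a sign pattern with ε_0 := 1. Suppose: (a) S^-(Ax) ≤ S^-(x) for all x ∈ ℝ^n; and (b) whenever Ax ≠ 0 and S^-(Ax) = S^-(x) = r with 0 ≤ r ≤ min{m,n}−1, the sign of the first nonzero component of Ax equals ε_r ε_{r+1} times the sign of the first nonzero component of x. Then A is SR(ε): every nonzero r×r minor of A has sign ε_r for all 1 ≤ r ≤ min{m,n}. -/

import Mathlib

open Matrix Filter

/-- Number of sign changes in a list of reals (consecutive pairs with negative product). -/
noncomputable def signChanges (l : List ℝ) : ℕ :=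
  (l.zip l.tail).countP (fun p => decide (p.1 * p.2 < 0))

/-- `S^-(v)`: sign changes of the coordinates of `v` after discarding zero entries. -/
noncomputable def Sm {n : ℕ} (v : Fin n → ℝ) : ℕ :=
  signChanges ((List.ofFn v).filter (fun x => decide (x ≠ 0)))

/-- `S^+(v)`: maximal number of sign changes over all ±1 completions of the zero
entries of `v`, with the convention `S^+(0) = n`. -/
noncomputable def Sp {n : ℕ} (v : Fin n → ℝ) : ℕ :=
  if v = 0 then n
  else Finset.univ.sup (fun σ : Fin n → Bool =>
    signChanges (List.ofFn (fun i => if v i = 0 then (if σ i then (1:ℝ) else -1) else v i)))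

/-- First nonzero entry of a vector (`0` if the vector is zero). -/
noncomputable def firstNz {n : ℕ} (v : Fin n → ℝ) : ℝ :=
  ((List.ofFn v).filter (fun x => decide (x ≠ 0))).headI

/-- `A` is strictly sign regular with sign pattern `ε`:
every `r × r` minor (`1 ≤ r ≤ min m n`) is nonzero with sign `ε r`. -/
def ssrPattern {m n : ℕ} (A : Matrix (Fin m) (Fin n) ℝ) (ε : ℕ → ℝ) : Prop :=
  ∀ r : ℕ, 1 ≤ r → r ≤ min m n → ∀ (f : Fin r → Fin m) (g : Fin r → Fin n),
    StrictMono f → StrictMono g → 0 < ε r * (A.submatrix f g).det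

/-- `A` is sign regular with sign pattern `ε`:
every nonzero `r × r` minor (`1 ≤ r ≤ min m n`) has sign `ε r`. -/
def srPattern {m n : ℕ} (A : Matrix (Fin m) (Fin n) ℝ) (ε : ℕ → ℝ) : Prop :=
  ∀ r : ℕ, 1 ≤ r → r ≤ min m n → ∀ (f : Fin r → Fin m) (g : Fin r → Fin n),
    StrictMono f → StrictMono g → 0 ≤ ε r * (A.submatrix f g).det

/-- The map `f` picks out consecutive indices. -/
def Contig {r m : ℕ} (f : Fin r → Fin m) : Prop :=
  ∃ a : ℕ, ∀ i : Fin r, (f i : ℕ) = a + (i : ℕ)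

/-
Induction on the order `r` of the minor. Given `f`, `g` with `D = A[f, g]` invertible, solve
`D c = (1, -1, 1, …)` and extend `c` by zero to `x`. Then `S⁻(x) ≤ r - 1 ≤ S⁻(A x)`, so (a)
forces equality: every `cᵢ` is nonzero and the first nonzero entry of `A x` is positive (a negative
one before row `f 0` would add a sign change). Condition (b) thus gives `sign c₀ = ε_{r-1} ε_r`,
while Cramer's rule and Laplace expansion along the first column write `det D · c₀` as a sum of
`(r-1)`-minors of `A`, each of sign `ε_{r-1}` by induction.
-/

lemma signChanges_cons_cons (a b : ℝ) (l : List ℝ) :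
    signChanges (a :: b :: l) = (if a * b < 0 then 1 else 0) + signChanges (b :: l) := by
  simp [signChanges, List.countP_cons, add_comm]

lemma signChanges_zero_cons (l : List ℝ) : signChanges (0 :: l) = signChanges l := by
  cases l with
  | nil => rfl
  | cons b t => simp [signChanges_cons_cons]

lemma signChanges_le_length_sub_one (l : List ℝ) : signChanges l ≤ l.length - 1 :=
  List.countP_le_length.trans (by simp)

lemma signChanges_le_signChanges_cons (a : ℝ) (l : List ℝ) :
    signChanges l ≤ signChanges (a :: l) := by
  cases l with
  | nil => simp [signChanges]
  | cons b t => rw [signChanges_cons_cons]; omega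

lemma signChanges_cons_le_cons_cons (b : ℝ) {a : ℝ} (ha : a ≠ 0) (l : List ℝ) :
    signChanges (b :: l) ≤ signChanges (b :: a :: l) := by
  cases l with
  | nil => simp [signChanges]
  | cons c t =>
    simp only [signChanges_cons_cons]
    have hsplit : b * c < 0 → b * a < 0 ∨ a * c < 0 := by
      intro hbc
      by_contra! h
      nlinarith [mul_nonneg h.1 h.2, mul_self_pos.mpr ha]
    split_ifs at * <;> grind

lemma signChanges_cons_le_of_sublist {l' l : List ℝ} (h : l'.Sublist l) (hl : ∀ a ∈ l, a ≠ 0)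
    (b : ℝ) : signChanges (b :: l') ≤ signChanges (b :: l) := by
  induction h generalizing b with
  | slnil => rfl
  | @cons l₁ l₂ a _ ih =>
    exact (ih (fun x hx => hl x (.tail _ hx)) b).trans
      (signChanges_cons_le_cons_cons b (hl a List.mem_cons_self) l₂)
  | @cons_cons l₁ l₂ a _ ih =>
    simp only [signChanges_cons_cons]
    exact Nat.add_le_add_left (ih (fun x hx => hl x (.tail _ hx)) a) _

lemma signChanges_le_of_sublist {l' l : List ℝ} (h : l'.Sublist l) (hl : ∀ a ∈ l, a ≠ 0) :
    signChanges l' ≤ signChanges l := by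
  simpa only [signChanges_zero_cons] using signChanges_cons_le_of_sublist h hl 0

lemma signChanges_ofFn_of_alternating {t : ℕ} (u : Fin (t + 1) → ℝ)
    (h : ∀ i : Fin t, u i.castSucc * u i.succ < 0) : signChanges (List.ofFn u) = t := by
  induction t with
  | zero => rfl
  | succ t ih =>
    have hrec := ih (fun i => u i.succ) (fun i => by simpa only [Fin.succ_castSucc] using h i.succ)
    rw [List.ofFn_succ] at hrec
    rw [List.ofFn_succ, List.ofFn_succ, signChanges_cons_cons, hrec, if_pos (by simpa using h 0)]
    omega

noncomputable def nonzeroEntries {n : ℕ} (v : Fin n → ℝ) : List ℝ :=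
  (List.ofFn v).filter (fun x => decide (x ≠ 0))

section nonzeroEntries

variable {n : ℕ}

lemma Sm_eq_signChanges_nonzeroEntries (v : Fin n → ℝ) :
    Sm v = signChanges (nonzeroEntries v) := rfl

lemma firstNz_eq_headI_nonzeroEntries (v : Fin n → ℝ) :
    firstNz v = (nonzeroEntries v).headI := rfl

lemma ne_zero_of_mem_nonzeroEntries {v : Fin n → ℝ} {a : ℝ} (ha : a ∈ nonzeroEntries v) :
    a ≠ 0 := by
  simpa using (List.mem_filter.1 ha).2

lemma nonzeroEntries_eq_map_filter (v : Fin n → ℝ) :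
    nonzeroEntries v = ((List.finRange n).filter (fun j => decide (v j ≠ 0))).map v := by
  rw [nonzeroEntries, List.ofFn_eq_map, List.filter_map]
  rfl

lemma filter_finRange_eq_map {r : ℕ} {g : Fin r → Fin n} (hg : StrictMono g) (P : Fin n → Prop)
    [DecidablePred P] (hP : ∀ j, P j → j ∈ Set.range g) :
    (List.finRange n).filter P = ((List.finRange r).filter (fun i => P (g i))).map g := by
  refine ((List.pairwise_lt_finRange n).filter _).eq_of_mem_iff
    (((List.pairwise_lt_finRange r).filter _).map g fun _ _ h => hg h) fun j => ?_
  simp only [List.mem_filter, List.mem_finRange, true_and, decide_eq_true_eq, List.mem_map]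
  constructor
  · intro hj
    obtain ⟨i, rfl⟩ := hP j hj
    exact ⟨i, hj, rfl⟩
  · rintro ⟨i, hi, rfl⟩
    exact hi

lemma nonzeroEntries_extend {r : ℕ} {g : Fin r → Fin n} (hg : StrictMono g) (c : Fin r → ℝ) :
    nonzeroEntries (Function.extend g c 0) = nonzeroEntries c := by
  have hsupp : ∀ j, Function.extend g c 0 j ≠ 0 → j ∈ Set.range g := fun j hj => by
    by_contra h
    exact hj (Function.extend_apply' _ _ _ fun ⟨i, hi⟩ => h ⟨i, hi⟩)
  rw [nonzeroEntries_eq_map_filter, nonzeroEntries_eq_map_filter,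
    filter_finRange_eq_map hg _ fun j hj => hsupp j (by simpa using hj), List.map_map]
  simp only [Function.comp_def, hg.injective.extend_apply]

lemma Sm_extend {r : ℕ} {g : Fin r → Fin n} (hg : StrictMono g) (c : Fin r → ℝ) :
    Sm (Function.extend g c 0) = Sm c := by
  simp only [Sm_eq_signChanges_nonzeroEntries, nonzeroEntries_extend hg]

lemma firstNz_extend {r : ℕ} {g : Fin r → Fin n} (hg : StrictMono g) (c : Fin r → ℝ) :
    firstNz (Function.extend g c 0) = firstNz c := by
  simp only [firstNz_eq_headI_nonzeroEntries, nonzeroEntries_extend hg]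

lemma Sm_le (v : Fin (n + 1) → ℝ) : Sm v ≤ n :=
  (signChanges_le_length_sub_one _).trans
    (by simpa using (List.length_filter_le _ (List.ofFn v)))

lemma map_finRange_sublist {r : ℕ} {p : Fin r → Fin n} (hp : StrictMono p) :
    ((List.finRange r).map p).Sublist (List.finRange n) := by
  have := filter_finRange_eq_map hp (· ∈ Set.range p) fun _ => id
  simp only [Set.mem_range_self, decide_true, List.filter_true] at this
  exact this ▸ List.filter_sublist

lemma forall_ne_zero_of_Sm_eq {v : Fin (n + 1) → ℝ} (hv : v ≠ 0) (h : Sm v = n) :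
    ∀ i, v i ≠ 0 := by
  obtain ⟨i₀, hi₀⟩ := Function.ne_iff.1 hv
  have hne : nonzeroEntries v ≠ [] :=
    List.ne_nil_of_mem (List.mem_filter.2 ⟨List.mem_ofFn.2 ⟨i₀, rfl⟩, by simpa using hi₀⟩)
  have hlen : (nonzeroEntries v).length = (List.ofFn v).length := by
    have := signChanges_le_length_sub_one (nonzeroEntries v)
    have := List.length_filter_le (fun x => decide (x ≠ 0)) (List.ofFn v)
    rw [← Sm_eq_signChanges_nonzeroEntries, h] at *
    simp only [nonzeroEntries, List.length_ofFn] at *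
    have := List.length_pos_iff.2 hne
    omega
  intro i
  simpa using List.length_filter_eq_length_iff.1 hlen (v i) (List.mem_ofFn.2 ⟨i, rfl⟩)

lemma firstNz_eq_apply_zero {v : Fin (n + 1) → ℝ} (h : v 0 ≠ 0) : firstNz v = v 0 := by
  simp [firstNz, List.ofFn_succ, h]

lemma le_Sm_of_alternating {t : ℕ} (v : Fin n → ℝ) {p : Fin (t + 1) → Fin n} (hp : StrictMono p)
    (h : ∀ i : Fin t, v (p i.castSucc) * v (p i.succ) < 0) : t ≤ Sm v := by
  rcases t with _ | t
  · exact Nat.zero_le _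
  have hnz : ∀ i, v (p i) ≠ 0 := by
    intro i hi
    rcases Fin.eq_castSucc_or_eq_last i with ⟨j, rfl⟩ | rfl
    · simpa [hi] using h j
    · have := h (Fin.last t)
      rw [Fin.succ_last, hi, mul_zero] at this
      exact this.false
  have hsub : (List.ofFn (v ∘ p)).Sublist (nonzeroEntries v) := by
    rw [← (List.filter_eq_self (l := List.ofFn (v ∘ p)) (p := fun x => decide (x ≠ 0))).2
      (by simp only [List.mem_ofFn, Function.comp_apply]; rintro _ ⟨i, rfl⟩; simpa using hnz i)]
    refine List.Sublist.filter _ ?_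
    simpa only [List.ofFn_eq_map, List.map_map] using (map_finRange_sublist hp).map v
  calc t + 1 = signChanges (List.ofFn (v ∘ p)) := (signChanges_ofFn_of_alternating _ h).symm
    _ ≤ Sm v := signChanges_le_of_sublist hsub fun _ => ne_zero_of_mem_nonzeroEntries

lemma exists_firstNz_eq {v : Fin n → ℝ} {i : Fin n} (hi : v i ≠ 0) :
    ∃ q ≤ i, v q ≠ 0 ∧ firstNz v = v q := by
  have hmem : i ∈ (List.finRange n).filter (fun j => decide (v j ≠ 0)) := by simp [hi]
  obtain ⟨q, rest, hL⟩ := List.exists_cons_of_ne_nil (List.ne_nil_of_mem hmem)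
  have hsorted := (List.pairwise_lt_finRange n).filter (fun j => decide (v j ≠ 0))
  rw [hL, List.pairwise_cons] at hsorted
  have hq : q ∈ (List.finRange n).filter (fun j => decide (v j ≠ 0)) := hL ▸ List.mem_cons_self
  refine ⟨q, ?_, by simpa using (List.mem_filter.1 hq).2, ?_⟩
  · rw [hL] at hmem
    rcases List.mem_cons.1 hmem with rfl | h
    · exact le_rfl
    · exact (hsorted.1 i h).le
  · rw [firstNz_eq_headI_nonzeroEntries, nonzeroEntries_eq_map_filter, hL]
    rfl

lemma firstNz_pos_of_alternating {t : ℕ} {v : Fin n → ℝ} {p : Fin (t + 1) → Fin n}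
    (hp : StrictMono p) (halt : ∀ i : Fin t, v (p i.castSucc) * v (p i.succ) < 0)
    (h0 : 0 < v (p 0)) (hS : Sm v ≤ t) : 0 < firstNz v := by
  obtain ⟨q, hq, hvq, hfirst⟩ := exists_firstNz_eq h0.ne'
  rw [hfirst]
  by_contra! hneg
  have hlt : q < p 0 := lt_of_le_of_ne hq fun h => by linarith [h ▸ hneg]
  set p' : Fin (t + 2) → Fin n := Fin.cons q p
  have hp' : StrictMono p' := by
    refine Fin.strictMono_iff_lt_succ.2 (Fin.cases ?_ fun i => ?_)
    · simpa [p'] using hlt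
    · simpa [p', ← Fin.succ_castSucc] using hp (Fin.castSucc_lt_succ (i := i))
  have halt' : ∀ i : Fin (t + 1), v (p' i.castSucc) * v (p' i.succ) < 0 := by
    refine Fin.cases ?_ fun i => ?_
    · simpa [p'] using mul_neg_of_neg_of_pos (lt_of_le_of_ne hneg hvq) h0
    · simpa [p', ← Fin.succ_castSucc] using halt i
  have := le_Sm_of_alternating v hp' halt'
  omega

end nonzeroEntries

lemma mulVec_extend_zero_apply {R ι κ ι' κ' : Type*} [CommSemiring R] [Fintype κ] [Fintype κ']
    (A : Matrix ι κ R) (f : ι' → ι) {g : κ' → κ} (hg : g.Injective) (c : κ' → R) (i : ι') :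
    (A *ᵥ Function.extend g c 0) (f i) = (A.submatrix f g *ᵥ c) i := by
  simp only [mulVec, dotProduct, submatrix_apply]
  exact (Fintype.sum_of_injective g hg _ _
    (fun k hk => by simp [Function.extend_apply' _ _ _ fun h => hk h])
    (fun j => by simp [hg.extend_apply])).symm

lemma det_mul_inv_mulVec_zero {K : Type*} [Field K] {s : ℕ}
    (D : Matrix (Fin (s + 1)) (Fin (s + 1)) K) (hD : D.det ≠ 0) :
    D.det * (D⁻¹ *ᵥ fun k => (-1) ^ (k : ℕ)) 0 =
      ∑ k : Fin (s + 1), (D.submatrix k.succAbove Fin.succ).det := by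
  have := congrFun (D.det_smul_inv_mulVec_eq_cramer (fun k => (-1 : K) ^ (k : ℕ)) hD.isUnit) 0
  rw [Pi.smul_apply, smul_eq_mul] at this
  rw [this, cramer_apply, det_succ_column_zero]
  refine Finset.sum_congr rfl fun k _ => ?_
  rw [updateCol_self, ← Fin.succAbove_zero, submatrix_updateCol_succAbove, ← mul_pow]
  norm_num

lemma nonneg_mul_of_one_eq_mul_sign {a b c d : ℝ} (ha : a = 1 ∨ a = -1) (hb : b = 1 ∨ b = -1)
    (hc : 1 = a * b * Real.sign c) (h : 0 ≤ a * (d * c)) : 0 ≤ b * d := by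
  have ha2 : a * a = 1 := by rcases ha with rfl | rfl <;> norm_num
  have hb2 : b * b = 1 := by rcases hb with rfl | rfl <;> norm_num
  have hc0 : c ≠ 0 := by
    rintro rfl
    simp at hc
  have hsign : Real.sign c = a * b := by
    linear_combination (-(a * b)) * hc - (Real.sign c * a * a) * hb2 - Real.sign c * ha2
  have hpos : 0 < a * b * c := hsign ▸ Real.sign_mul_pos_of_ne_zero c hc0
  have hprod : b * d * (a * b * c) = a * (d * c) := by linear_combination (a * d * c) * hb2
  exact nonneg_of_mul_nonneg_left (hprod ▸ h) hpos

lemma minor_sign_succ {m n : ℕ} {A : Matrix (Fin m) (Fin n) ℝ} {ε : ℕ → ℝ}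
    (hsv : ∀ r, ε r = 1 ∨ ε r = -1)
    (ha : ∀ x : Fin n → ℝ, Sm (A *ᵥ x) ≤ Sm x)
    (hb : ∀ x : Fin n → ℝ, A *ᵥ x ≠ 0 → ∀ r : ℕ, r ≤ min m n - 1 →
      Sm (A *ᵥ x) = r → Sm x = r →
      Real.sign (firstNz (A *ᵥ x)) = ε r * ε (r + 1) * Real.sign (firstNz x))
    {s : ℕ} (hs : s + 1 ≤ min m n)
    (ih : ∀ (f : Fin s → Fin m) (g : Fin s → Fin n), StrictMono f → StrictMono g →
      0 ≤ ε s * (A.submatrix f g).det)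
    {f : Fin (s + 1) → Fin m} {g : Fin (s + 1) → Fin n} (hf : StrictMono f) (hg : StrictMono g) :
    0 ≤ ε (s + 1) * (A.submatrix f g).det := by
  set D := A.submatrix f g
  by_cases hD : D.det = 0
  · simp [hD]
  set c := D⁻¹ *ᵥ fun k : Fin (s + 1) => (-1 : ℝ) ^ (k : ℕ)
  set x := Function.extend g c 0
  have hDc : D *ᵥ c = fun k : Fin (s + 1) => (-1 : ℝ) ^ (k : ℕ) := by
    rw [mulVec_mulVec, mul_nonsing_inv _ (Ne.isUnit hD), one_mulVec]
  have hc : c ≠ 0 := fun h => by simpa [h] using congrFun hDc 0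
  have hAx : ∀ k, (A *ᵥ x) (f k) = (-1) ^ (k : ℕ) := fun k => by
    rw [mulVec_extend_zero_apply A f hg.injective, hDc]
  have halt : ∀ k : Fin s, (A *ᵥ x) (f k.castSucc) * (A *ᵥ x) (f k.succ) < 0 := fun k => by
    simp [hAx, pow_succ]
  have hAx_pos : 0 < (A *ᵥ x) (f 0) := by simp [hAx]
  have hSAx := le_Sm_of_alternating _ hf halt
  have hSc : Sm c = s := le_antisymm (Sm_le c) (Sm_extend hg c ▸ hSAx.trans (ha x))
  have hSx : Sm x = s := (Sm_extend hg c).trans hSc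
  have hc0 : c 0 ≠ 0 := forall_ne_zero_of_Sm_eq hc hSc 0
  have hsign := hb x (fun h => hAx_pos.ne' (by simp [h])) s (by omega)
    (le_antisymm (hSx ▸ ha x) hSAx) hSx
  rw [firstNz_pos_of_alternating hf halt hAx_pos (hSx ▸ ha x) |> Real.sign_of_pos,
    firstNz_extend hg, firstNz_eq_apply_zero hc0] at hsign
  have hminors : 0 ≤ ε s * (D.det * c 0) := by
    rw [det_mul_inv_mulVec_zero D hD, Finset.mul_sum]
    exact Finset.sum_nonneg fun k _ =>
      ih _ _ (hf.comp (Fin.strictMono_succAbove k)) (hg.comp (Fin.strictMono_succ))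
  exact nonneg_mul_of_one_eq_mul_sign (hsv s) (hsv (s + 1)) hsign hminors

theorem stmt12 {m n : ℕ} (A : Matrix (Fin m) (Fin n) ℝ) (ε : ℕ → ℝ)
    (hε0 : ε 0 = 1) (hsv : ∀ r, ε r = 1 ∨ ε r = -1)
    (ha : ∀ x : Fin n → ℝ, Sm (A *ᵥ x) ≤ Sm x)
    (hb : ∀ x : Fin n → ℝ, A *ᵥ x ≠ 0 → ∀ r : ℕ, r ≤ min m n - 1 →
      Sm (A *ᵥ x) = r → Sm x = r →
      Real.sign (firstNz (A *ᵥ x)) = ε r * ε (r + 1) * Real.sign (firstNz x)) :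
    srPattern A ε := by
  have minors : ∀ r ≤ min m n, ∀ (f : Fin r → Fin m) (g : Fin r → Fin n),
      StrictMono f → StrictMono g → 0 ≤ ε r * (A.submatrix f g).det := by
    intro r
    induction r with
    | zero => intro _ f g _ _; simp [hε0]
    | succ s ih => exact fun hr f g hf hg =>
        minor_sign_succ hsv ha hb hr (fun f g => ih (by omega) f g) hf hg
  exact fun r _ hr => minors r hr
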